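/- arXiv:1006.1404 — 5 statements merged into one kernel-verified Lean document; each statement's English description precedes it below -/
import Mathlib

section
/- Let c : ℕ → ℝ with 0 ≤ c k ≤ 1/2 for all k. On Ω = ℕ → Fin 3, let μ be the infinite product of the probability measures m k on Fin 3 given by m k {0} = c k, m k {1} = c k, m k {2} = 1 − 2 · c k. Then the event { ω : the set {k : ω k = 0} is infinite, and ω k ≠ 1 for all k } has μ-measure 0. -/
/-!
Since `0` and `1` are equally likely in every round, the probability that the first `1` occurs
at round `k` equals the probability of a `0` at round `k` with no `1` before it. The rounds at
which the first `1` occurs are disjoint events, so their probabilities sum to at most `1` and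
the tails of that series tend to `0`. A play with infinitely many `0`s and no `1` has, for every
`m`, a `0` at some round `k ≥ m` with no `1` before it, so its probability is bounded by the
`m`-th tail.
-/

open MeasureTheory
open scoped ENNReal

section VisitAvoiding

variable {α : Type*}

def visitAvoiding (b : α) (k : ℕ) (x : α) : Set (ℕ → α) :=
  {ω | (∀ j < k, ω j ≠ b) ∧ ω k = x}

lemma pairwise_disjoint_visitAvoiding_self (b : α) :
    Pairwise (Function.onFun Disjoint fun k => visitAvoiding b k b) :=
  (pairwise_disjoint_on _).2 fun _ _ hkl =>
    Set.disjoint_left.2 fun _ hk hl => hl.1 _ hkl hk.2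

lemma measurableSet_visitAvoiding [MeasurableSpace α] [MeasurableSingletonClass α]
    (b : α) (k : ℕ) (x : α) : MeasurableSet (visitAvoiding b k x) :=
  measurableSet_setOfPred.2 (by fun_prop)

theorem measure_infinite_eq_and_forall_ne_eq_zero [MeasurableSpace α]
    [MeasurableSingletonClass α] (μ : Measure (ℕ → α)) [IsFiniteMeasure μ] (a b : α)
    (h : ∀ k, μ (visitAvoiding b k a) = μ (visitAvoiding b k b)) :
    μ {ω | {k | ω k = a}.Infinite ∧ ∀ k, ω k ≠ b} = 0 := by
  have hfin : ∑' k, μ (visitAvoiding b k b) ≠ ∞ := by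
    rw [← measure_iUnion (pairwise_disjoint_visitAvoiding_self b)
      fun k => measurableSet_visitAvoiding b k b]
    exact measure_ne_top μ _
  have htail : ∀ m, μ {ω | {k | ω k = a}.Infinite ∧ ∀ k, ω k ≠ b}
      ≤ ∑' k, μ (visitAvoiding b (k + m) b) := fun m =>
    calc _ ≤ μ (⋃ k, visitAvoiding b (k + m) a) := measure_mono fun ω hω => by
          obtain ⟨k, hka, hmk⟩ := hω.1.exists_gt m
          refine Set.mem_iUnion.2 ⟨k - m, ?_⟩
          rw [Nat.sub_add_cancel hmk.le]
          exact ⟨fun j _ => hω.2 j, hka⟩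
      _ ≤ ∑' k, μ (visitAvoiding b (k + m) a) := measure_iUnion_le _
      _ = ∑' k, μ (visitAvoiding b (k + m) b) := tsum_congr fun k => h (k + m)
  exact nonpos_iff_eq_zero.1 (ge_of_tendsto' (ENNReal.tendsto_sum_nat_add _ hfin) htail)

end VisitAvoiding

section ProductCylinder

variable {α : Type*} [MeasurableSpace α] [MeasurableSingletonClass α]
  {μ : Measure (ℕ → α)} {w : ℕ → α → ℝ≥0∞}

lemma measure_forall_lt_mem
    (hμ : ∀ (n : ℕ) (s : Fin n → α), μ {ω | ∀ k : Fin n, ω k = s k} = ∏ k : Fin n, w k (s k))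
    (n : ℕ) (A : ℕ → Finset α) :
    μ {ω | ∀ k < n, ω k ∈ A k} = ∏ k ∈ Finset.range n, ∑ a ∈ A k, w k a := by
  have hunion : {ω : ℕ → α | ∀ k < n, ω k ∈ A k}
      = ⋃ s ∈ Fintype.piFinset (fun k : Fin n => A k), {ω | ∀ k : Fin n, ω k = s k} := by
    ext ω
    simp only [Set.mem_ofPred_eq, Set.mem_iUnion, Fintype.mem_piFinset, exists_prop]
    refine ⟨fun h => ⟨fun k => ω k, fun k => h k k.isLt, fun k => rfl⟩, ?_⟩
    rintro ⟨s, hs, hωs⟩ k hk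
    exact hωs ⟨k, hk⟩ ▸ hs ⟨k, hk⟩
  rw [hunion, measure_biUnion_finset, ← Fin.prod_univ_eq_prod_range (fun k => ∑ a ∈ A k, w k a),
    Finset.prod_univ_sum]
  · exact Finset.sum_congr rfl fun s _ => hμ n s
  · intro s _ t _ hst
    exact Set.disjoint_left.mpr fun ω hs ht => hst (funext fun k => (hs k).symm.trans (ht k))
  · intro s _
    simp only [Set.ofPred_forall]
    exact MeasurableSet.iInter fun k => measurable_pi_apply _ (measurableSet_singleton _)

lemma measure_visitAvoiding [Fintype α] [DecidableEq α]
    (hμ : ∀ (n : ℕ) (s : Fin n → α), μ {ω | ∀ k : Fin n, ω k = s k} = ∏ k : Fin n, w k (s k))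
    (b : α) (k : ℕ) (x : α) :
    μ (visitAvoiding b k x) = (∏ j ∈ Finset.range k, ∑ y ∈ {b}ᶜ, w j y) * w k x := by
  have hcyl : visitAvoiding b k x
      = {ω | ∀ j < k + 1, ω j ∈ (if j = k then {x} else {b}ᶜ : Finset α)} := by
    ext ω
    simp only [visitAvoiding, Set.mem_ofPred_eq, Nat.lt_succ_iff_lt_or_eq, or_imp, forall_and,
      forall_eq]
    refine and_congr (forall₂_congr fun j hj => ?_) (by simp)
    simp [hj.ne]
  rw [hcyl, measure_forall_lt_mem hμ, Finset.prod_range_succ, if_pos rfl, Finset.sum_singleton]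
  congr 1
  exact Finset.prod_congr rfl fun j hj => by rw [if_neg (Finset.mem_range.1 hj).ne]

end ProductCylinder

theorem stmt1_general (c : ℕ → ℝ)
    (w : ℕ → Fin 3 → ℝ≥0∞)
    (hw0 : ∀ k, w k 0 = ENNReal.ofReal (c k))
    (hw1 : ∀ k, w k 1 = ENNReal.ofReal (c k))
    (μ : Measure (ℕ → Fin 3)) [IsProbabilityMeasure μ]
    (hμ : ∀ (n : ℕ) (s : Fin n → Fin 3),
      μ {ω | ∀ k : Fin n, ω k = s k} = ∏ k : Fin n, w k (s k)) :
    μ {ω | {k | ω k = 0}.Infinite ∧ ∀ k, ω k ≠ 1} = 0 :=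
  measure_infinite_eq_and_forall_ne_eq_zero μ 0 1 fun k => by
    rw [measure_visitAvoiding hμ, measure_visitAvoiding hμ, hw0, hw1]

/-- Let `c : ℕ → ℝ` with `0 ≤ c k ≤ 1/2`.  Let `μ` be the infinite product, over `k : ℕ`,
of the probability measures on `Fin 3` giving weight `c k` to `0`, `c k` to `1` and
`1 - 2 c k` to `2` (characterized by its values on the cylinders determined by the first
`n` coordinates).  Then the event "`{k | ω k = 0}` is infinite and `ω k ≠ 1` for all `k`"
has `μ`-measure `0`. -/
theorem stmt1 (c : ℕ → ℝ) (hc : ∀ k, 0 ≤ c k ∧ c k ≤ 1 / 2)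
    (w : ℕ → Fin 3 → ℝ≥0∞)
    (hw0 : ∀ k, w k 0 = ENNReal.ofReal (c k))
    (hw1 : ∀ k, w k 1 = ENNReal.ofReal (c k))
    (hw2 : ∀ k, w k 2 = ENNReal.ofReal (1 - 2 * c k))
    (μ : Measure (ℕ → Fin 3)) [IsProbabilityMeasure μ]
    (hμ : ∀ (n : ℕ) (s : Fin n → Fin 3),
      μ {ω | ∀ k : Fin n, ω k = s k} = ∏ k : Fin n, w k (s k)) :
    μ {ω | {k | ω k = 0}.Infinite ∧ ∀ k, ω k ≠ 1} = 0 :=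
  stmt1_general c w hw0 hw1 μ hμ
end

section
/- Fix ε ∈ (0,1) and let γ be the probability measure on ℕ∞ := WithTop ℕ defined by γ {n} = ε · (1 − ε)^n for every n : ℕ and γ {∞} = 0. Then for every probability measure ν on ℕ∞, the product measure ν × γ assigns to the diagonal { (t, r) : t = r } measure at most ε. -/
open MeasureTheory
open scoped ENNReal

/-! By Fubini the diagonal has `ν × γ`-measure `∫ γ {t} dν(t)`, an average of atoms of `γ`;
each atom `ε (1 - ε)ⁿ` is at most `ε`, whatever `ν` is. -/

namespace MeasureTheory.Measure

variable {α : Type*} [MeasurableSpace α] [MeasurableEq α]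

theorem prod_diagonal_eq_lintegral (μ ν : Measure α) [SFinite ν] :
    μ.prod ν (Set.diagonal α) = ∫⁻ t, ν {t} ∂μ := by
  rw [prod_apply measurableSet_diagonal]
  congr! with t
  ext r
  simp [Set.mem_diagonal_iff, eq_comm]

theorem prod_diagonal_le_of_forall_singleton_le (μ ν : Measure α) [IsProbabilityMeasure μ]
    [SFinite ν] {c : ℝ≥0∞} (hc : ∀ t, ν {t} ≤ c) :
    μ.prod ν (Set.diagonal α) ≤ c := by
  rw [prod_diagonal_eq_lintegral]
  exact lintegral_le_const (ae_of_all _ hc)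

end MeasureTheory.Measure

/-- Fix `ε ∈ (0,1)` and let `γ` be the probability measure on `ℕ∞ = WithTop ℕ` with
`γ {n} = ε (1-ε)ⁿ` for `n : ℕ` and `γ {∞} = 0`.  Then for every probability measure `ν`
on `ℕ∞`, the product measure `ν × γ` gives the diagonal measure at most `ε`. -/
theorem stmt4 (ε : ℝ) (hε0 : 0 < ε) (hε1 : ε < 1)
    (γ : Measure ℕ∞) [IsProbabilityMeasure γ]
    (hγ : ∀ n : ℕ, γ {(n : ℕ∞)} = ENNReal.ofReal (ε * (1 - ε) ^ n))
    (hγtop : γ {(⊤ : ℕ∞)} = 0)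
    (ν : Measure ℕ∞) [IsProbabilityMeasure ν] :
    (ν.prod γ) {p : ℕ∞ × ℕ∞ | p.1 = p.2} ≤ ENNReal.ofReal ε := by
  refine Measure.prod_diagonal_le_of_forall_singleton_le ν γ fun t => ?_
  induction t using ENat.recTopCoe with
  | top => simp [hγtop]
  | coe n =>
    rw [hγ n]
    gcongr
    exact mul_le_of_le_one_right hε0.le (pow_le_one₀ (by linarith) (by linarith))
end

section
/- Let ν★ be the probability measure on ℕ∞ := WithTop ℕ defined by ν★ {∞} = 1/2 and ν★ {n} = 2^{−(n+2)} for every n : ℕ. Then for every probability measure μ on ℕ∞, the product measure ν★ × μ assigns strictly positive measure to the diagonal { (t, r) : t = r }. -/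
open MeasureTheory
open scoped ENNReal

namespace MeasureTheory.Measure

variable {α : Type*} [MeasurableSpace α]

theorem exists_measure_singleton_ne_zero [Countable α] {μ : Measure α} (hμ : μ ≠ 0) :
    ∃ x, μ {x} ≠ 0 := by
  by_contra! h
  exact hμ (ext_of_singleton (by simpa using h))

theorem prod_diagonal_pos_of_singleton {ν μ : Measure α} [SFinite μ] {x : α}
    (hν : ν {x} ≠ 0) (hμ : μ {x} ≠ 0) : 0 < ν.prod μ (Set.diagonal α) :=
  calc 0 < ν {x} * μ {x} := ENNReal.mul_pos hν hμ
    _ = ν.prod μ ({x} ×ˢ {x}) := (prod_prod _ _).symm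
    _ ≤ ν.prod μ (Set.diagonal α) := by
      rw [Set.singleton_prod_singleton]
      exact measure_mono (Set.singleton_subset_iff.2 (Set.mem_diagonal x))

theorem prod_diagonal_pos_of_forall_singleton_ne_zero [Countable α] {ν μ : Measure α}
    [SFinite μ] (hν : ∀ x, ν {x} ≠ 0) (hμ : μ ≠ 0) : 0 < ν.prod μ (Set.diagonal α) :=
  let ⟨x, hx⟩ := exists_measure_singleton_ne_zero hμ
  prod_diagonal_pos_of_singleton (hν x) hx

end MeasureTheory.Measure

theorem stmt6_general (ν : Measure ℕ∞)
    (hνtop : ν {(⊤ : ℕ∞)} = 1 / 2)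
    (hν : ∀ n : ℕ, ν {(n : ℕ∞)} = (1 / 2 : ℝ≥0∞) ^ (n + 2))
    (μ : Measure ℕ∞) [IsProbabilityMeasure μ] :
    0 < (ν.prod μ) {p : ℕ∞ × ℕ∞ | p.1 = p.2} := by
  have hν_atoms : ∀ x : ℕ∞, ν {x} ≠ 0 := by
    intro x
    cases x with
    | top => simp [hνtop]
    | coe n => simp [hν n]
  exact Measure.prod_diagonal_pos_of_forall_singleton_ne_zero hν_atoms
    (IsProbabilityMeasure.ne_zero μ)

/-- Let `ν★` be the probability measure on `ℕ∞ = WithTop ℕ` with `ν★ {∞} = 1/2` and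
`ν★ {n} = 2^{-(n+2)}` for `n : ℕ`.  Then for every probability measure `μ` on `ℕ∞`, the
product measure `ν★ × μ` gives strictly positive measure to the diagonal. -/
theorem stmt6 (ν : Measure ℕ∞) [IsProbabilityMeasure ν]
    (hνtop : ν {(⊤ : ℕ∞)} = 1 / 2)
    (hν : ∀ n : ℕ, ν {(n : ℕ∞)} = (1 / 2 : ℝ≥0∞) ^ (n + 2))
    (μ : Measure ℕ∞) [IsProbabilityMeasure μ] :
    0 < (ν.prod μ) {p : ℕ∞ × ℕ∞ | p.1 = p.2} :=
  stmt6_general ν hνtop hν μ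
end

section
/- There is no sequence p : ℕ → ℝ with 0 ≤ p n ≤ 1 for all n which is eventually periodic (i.e., there exist N and d > 0 with p (n + d) = p n for all n ≥ N) and which satisfies both: (i) for every n, p n · ∏_{j<n} (1 − p j) > 0, and (ii) there exists δ > 0 with ∏_{j≤n} (1 − p j) ≥ δ for all n. -/
/-!
If `p` is eventually periodic with period `d` from index `N` on, condition (i) forces
`c = p N > 0`, and the factor `1 - c` then recurs at every index `N + k d`. As all factors
lie in `[0, 1]`, the partial products are at most `(1 - c) ^ k` along `N + k d`, so they tend
to `0` and cannot stay above any `δ > 0`.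
-/

open Finset

theorem Function.apply_add_mul_eq_of_forall_ge {α : Type*} {f : ℕ → α} {N d : ℕ}
    (h : ∀ n ≥ N, f (n + d) = f n) (k : ℕ) : f (N + k * d) = f N := by
  induction k with
  | zero => simp
  | succ k ih => rw [Nat.succ_mul, ← add_assoc, h _ (by omega), ih]

section OrderedSemiring

variable {R : Type*} [CommSemiring R] [PartialOrder R] [IsOrderedRing R] {f : ℕ → R}

theorem Finset.antitone_prod_range_of_le_one (h0 : ∀ j, 0 ≤ f j) (h1 : ∀ j, f j ≤ 1) :
    Antitone fun n ↦ ∏ j ∈ range n, f j :=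
  (prod_anti_set_of_le_one h0 h1).comp_monotone range_mono

theorem Finset.prod_range_add_mul_le_pow (h0 : ∀ j, 0 ≤ f j) (h1 : ∀ j, f j ≤ 1)
    {N d : ℕ} (hd : 0 < d) {r : R} (hr : ∀ k, f (N + k * d) ≤ r) (k : ℕ) :
    ∏ j ∈ range (N + k * d), f j ≤ r ^ k := by
  induction k with
  | zero => simpa using prod_le_one (fun j _ ↦ h0 j) fun j _ ↦ h1 j
  | succ k ih =>
    calc ∏ j ∈ range (N + (k + 1) * d), f j
        ≤ ∏ j ∈ range (N + k * d + 1), f j :=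
          antitone_prod_range_of_le_one h0 h1 (by rw [Nat.succ_mul]; omega)
      _ = (∏ j ∈ range (N + k * d), f j) * f (N + k * d) := prod_range_succ _ _
      _ ≤ r ^ k * r :=
          mul_le_mul ih (hr k) (h0 _) (pow_nonneg ((h0 N).trans (by simpa using hr 0)) k)
      _ = r ^ (k + 1) := (pow_succ r k).symm

end OrderedSemiring

/-- There is no sequence `p : ℕ → ℝ` with `0 ≤ p n ≤ 1` for all `n`, eventually periodic,
such that both (i) `p n · ∏_{j<n} (1 - p j) > 0` for every `n`, and (ii) some `δ > 0`
satisfies `∏_{j≤n} (1 - p j) ≥ δ` for all `n`. -/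
theorem stmt8 :
    ¬ ∃ p : ℕ → ℝ,
        (∀ n, 0 ≤ p n ∧ p n ≤ 1) ∧
        (∃ N d, 0 < d ∧ ∀ n ≥ N, p (n + d) = p n) ∧
        (∀ n, 0 < p n * ∏ j ∈ Finset.range n, (1 - p j)) ∧
        (∃ δ > (0 : ℝ), ∀ n, δ ≤ ∏ j ∈ Finset.range (n + 1), (1 - p j)) := by
  rintro ⟨p, hp01, ⟨N, d, hd, hper⟩, hpos, δ, hδ, hprod⟩
  have h0 : ∀ j, 0 ≤ 1 - p j := fun j ↦ sub_nonneg.2 (hp01 j).2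
  have h1 : ∀ j, 1 - p j ≤ 1 := fun j ↦ sub_le_self _ (hp01 j).1
  have hpN : 0 < p N := pos_of_mul_pos_left (hpos N) (prod_nonneg fun j _ ↦ h0 j)
  obtain ⟨K, hK⟩ := exists_pow_lt_of_lt_one hδ (show 1 - p N < 1 by linarith)
  have hbound := prod_range_add_mul_le_pow h0 h1 hd
    (fun k ↦ (congrArg (1 - ·) (Function.apply_add_mul_eq_of_forall_ge hper k)).le) K
  have hmono := antitone_prod_range_of_le_one h0 h1 (Nat.le_succ (N + K * d))
  linarith [hprod (N + K * d)]
end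

section
/- On Ω = ℕ → Fin 3, let μ be the infinite product of the uniform probability measure on Fin 3. For every family of functions f, with f n : (Fin n → Fin 3) → Fin 3 for each n, the event { ω : ∃ k, (∀ j < k, ω j = f j (fun i : Fin j => ω i)) ∧ ω k = f k (fun i : Fin k => ω i) + 1 } has μ-measure exactly 1/2 (addition taken in Fin 3). -/
/-!
Against a fixed strategy `f` of Adam there is exactly one infinite sequence of ties, `tiePlay f`.
Hence "Eve wins first at round `k`" is the cylinder event that her first `k` moves follow
`tiePlay f` and her move `k` is the winning reply, of measure `3⁻¹ ^ (k + 1)`. These events are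
disjoint for different `k`, so the probability that Eve eventually wins is
`∑ₖ 3⁻¹ ^ (k + 1) = 1 / 2`.
-/

open MeasureTheory
open scoped ENNReal

section Play

variable {α : Type*} (f : (n : ℕ) → (Fin n → α) → α)

def tiePlay : ℕ → α
  | n => f n (fun i : Fin n => tiePlay i)
decreasing_by exact i.isLt

lemma tiePlay_eq (n : ℕ) : tiePlay f n = f n (fun i : Fin n => tiePlay f i) := by
  rw [tiePlay]

lemma eq_tiePlay_of_forall_lt {ω : ℕ → α} {k : ℕ}
    (h : ∀ j < k, ω j = f j (fun i : Fin j => ω i)) : ∀ j < k, ω j = tiePlay f j := by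
  intro j hj
  induction j using Nat.strong_induction_on with
  | _ j ih =>
    rw [h j hj, tiePlay_eq]
    exact congrArg _ (funext fun i => ih i i.isLt (i.isLt.trans hj))

def firstDeviation (g : (n : ℕ) → (Fin n → α) → α) (k : ℕ) : Set (ℕ → α) :=
  {ω | (∀ j < k, ω j = f j (fun i : Fin j => ω i)) ∧ ω k = g k (fun i : Fin k => ω i)}

variable (g : (n : ℕ) → (Fin n → α) → α)

lemma firstDeviation_eq_cylinder (k : ℕ) :
    firstDeviation f g k = {ω | ∀ j : Fin (k + 1), ω j =
      Fin.snoc (α := fun _ => α) (fun i : Fin k => tiePlay f i)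
        (g k (fun i : Fin k => tiePlay f i)) j} := by
  ext ω
  simp only [firstDeviation, Set.mem_ofPred_eq, Fin.forall_fin_succ', Fin.snoc_castSucc,
    Fin.snoc_last, Fin.val_castSucc, Fin.val_last]
  constructor
  · rintro ⟨hties, hk⟩
    have hpre := eq_tiePlay_of_forall_lt f hties
    refine ⟨fun i => hpre i i.isLt, ?_⟩
    rw [hk]
    exact congrArg _ (funext fun i => hpre i i.isLt)
  · rintro ⟨hpre, hk⟩
    have hrestrict : (fun i : Fin k => ω i) = fun i : Fin k => tiePlay f i := funext hpre
    refine ⟨fun j hj => ?_, by rw [hk, hrestrict]⟩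
    rw [hpre ⟨j, hj⟩, tiePlay_eq]
    exact congrArg _ (funext fun i => (hpre ⟨i, i.isLt.trans hj⟩).symm)

lemma pairwise_disjoint_firstDeviation (hfg : ∀ n s, g n s ≠ f n s) :
    Pairwise (Function.onFun Disjoint (firstDeviation f g)) := by
  suffices h : ∀ k l, k < l → Disjoint (firstDeviation f g k) (firstDeviation f g l) from
    fun k l hkl => hkl.lt_or_gt.elim (h k l) fun hlk => (h l k hlk).symm
  intro k l hkl
  rw [Set.disjoint_left]
  rintro ω ⟨-, hdev⟩ ⟨hties, -⟩
  exact hfg k _ (hdev.symm.trans (hties k hkl))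

end Play

lemma measurableSet_cylinder {α : Type*} [MeasurableSpace α] [MeasurableSingletonClass α]
    (n : ℕ) (s : Fin n → α) : MeasurableSet {ω : ℕ → α | ∀ k : Fin n, ω k = s k} := by
  simp only [Set.ofPred_forall]
  exact MeasurableSet.iInter fun k => measurable_pi_apply _ (measurableSet_singleton _)

lemma tsum_one_third_pow_succ : ∑' k : ℕ, (1 / 3 : ℝ≥0∞) ^ (k + 1) = 1 / 2 := by
  rw [ENNReal.tsum_geometric_add_one]
  have hsub : (1 : ℝ≥0∞) - 1 / 3 = 2 / 3 :=
    ENNReal.sub_eq_of_eq_add (by norm_num)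
      (by rw [ENNReal.div_add_div_same]; norm_num [ENNReal.div_self])
  rw [hsub, ENNReal.inv_div (by norm_num) (by norm_num),
    ← ENNReal.toReal_eq_toReal_iff' (by finiteness) (by norm_num)]
  simp [ENNReal.toReal_mul, ENNReal.toReal_div]
  norm_num

theorem stmt10_general (μ : Measure (ℕ → Fin 3))
    (hμ : ∀ (n : ℕ) (s : Fin n → Fin 3),
      μ {ω | ∀ k : Fin n, ω k = s k} = (1 / 3 : ℝ≥0∞) ^ n)
    (f : (n : ℕ) → (Fin n → Fin 3) → Fin 3) :
    μ {ω | ∃ k, (∀ j < k, ω j = f j (fun i : Fin j => ω i)) ∧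
        ω k = f k (fun i : Fin k => ω i) + 1} = 1 / 2 := by
  have hwin : ∀ n s, f n s + 1 ≠ f n s := fun n s => by simp
  change μ {ω | ∃ k, ω ∈ firstDeviation f (fun n s => f n s + 1) k} = _
  simp only [Set.ofPred_exists, Set.ofPred_mem_eq]
  rw [measure_iUnion (pairwise_disjoint_firstDeviation f _ hwin)
    fun k => firstDeviation_eq_cylinder f _ k ▸ measurableSet_cylinder _ _]
  simp_rw [firstDeviation_eq_cylinder, hμ]
  exact tsum_one_third_pow_succ

/-- Let `μ` be the infinite product over `ℕ` of the uniform probability measure on `Fin 3`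
(characterized by its values on the cylinders determined by the first `n` coordinates).
For every family `f` with `f n : (Fin n → Fin 3) → Fin 3`, the event "there is a round `k`
with `ω j = f j (ω↾j)` for all `j < k` (ties) and `ω k = f k (ω↾k) + 1`" has `μ`-measure
exactly `1/2` (addition taken in `Fin 3`). -/
theorem stmt10 (μ : Measure (ℕ → Fin 3)) [IsProbabilityMeasure μ]
    (hμ : ∀ (n : ℕ) (s : Fin n → Fin 3),
      μ {ω | ∀ k : Fin n, ω k = s k} = (1 / 3 : ℝ≥0∞) ^ n)
    (f : (n : ℕ) → (Fin n → Fin 3) → Fin 3) :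
    μ {ω | ∃ k, (∀ j < k, ω j = f j (fun i : Fin j => ω i)) ∧
        ω k = f k (fun i : Fin k => ω i) + 1} = 1 / 2 :=
  stmt10_general μ hμ f
end
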